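/- arXiv:1507.07388 — 6 statements merged into one kernel-verified Lean document; each statement's English description precedes it below -/
import Mathlib

section
/- For all t ≥ 1 with log t ≤ 1, the inequality √((1 - log t)(1 + log t)) - (1 - log t) + (2/(t-1))·log t ≥ 0 holds (with the convention that for t = 1 the term 2·log t/(t-1) is interpreted as its limit 2). -/
theorem ks_condition_iii (t : ℝ) (ht : 1 ≤ t) (hlog : Real.log t ≤ 1) :
    Real.sqrt ((1 - Real.log t) * (1 + Real.log t)) - (1 - Real.log t)
      + (if t = 1 then 2 else (2 / (t - 1)) * Real.log t) ≥ 0 := by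
  set L := Real.log t with hL
  have hL0 : 0 ≤ L := Real.log_nonneg ht
  have h1 : 1 - L ≤ Real.sqrt ((1 - L) * (1 + L)) := by
    have : (1 - L) * (1 - L) ≤ (1 - L) * (1 + L) := by nlinarith
    calc 1 - L = Real.sqrt ((1 - L) * (1 - L)) := by
          rw [Real.sqrt_mul_self (by linarith)]
      _ ≤ Real.sqrt ((1 - L) * (1 + L)) := Real.sqrt_le_sqrt this
  have h2 : (0:ℝ) ≤ if t = 1 then 2 else (2 / (t - 1)) * L := by
    split_ifs with h
    · norm_num
    · have ht1 : 1 < t := lt_of_le_of_ne ht (Ne.symm h)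
      have : 0 ≤ 2 / (t - 1) := le_of_lt (by apply div_pos <;> linarith)
      exact mul_nonneg this hL0
  linarith
end

section
/- For all p ∈ [0,√2] and θ ∈ [π/6, π), the inequality 1 - e^{(2p/√6)·sin θ} + √2·p·e^{(2p/√6)·sin θ}·sin(θ - π/6) + √2·p·sin(θ + π/6) ≥ 0 holds. -/
lemma exp_le_one_div_one_sub (x : ℝ) (hx : x < 1) : Real.exp x ≤ 1 / (1 - x) := by
  have h := Real.add_one_le_exp (-x)
  have h1 : 0 < 1 - x := by linarith
  have h2 : Real.exp x * (1 - x) ≤ 1 := by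
    calc Real.exp x * (1 - x) ≤ Real.exp x * Real.exp (-x) := by
          apply mul_le_mul_of_nonneg_left (by linarith) (Real.exp_nonneg x)
      _ = 1 := by rw [← Real.exp_add]; simp
  rw [le_div_iff₀ h1]; linarith

lemma exp_key : Real.exp (2 / Real.sqrt 3) ≤ 1 + 2 * Real.sqrt 3 := by
  have hs3 : Real.sqrt 3 ^ 2 = 3 := Real.sq_sqrt (by norm_num)
  have hlo : (1.73 : ℝ) < Real.sqrt 3 := by nlinarith [Real.sqrt_nonneg 3]
  have hhi : Real.sqrt 3 < 1.74 := by nlinarith [Real.sqrt_nonneg 3]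
  set x : ℝ := 2 / (3 * Real.sqrt 3) with hxdef
  have hx0 : 0 < x := by positivity
  have hx1 : x < 1 := by
    rw [hxdef, div_lt_one (by positivity)]; nlinarith
  have h3x : 2 / Real.sqrt 3 = 3 * x := by
    rw [hxdef]; field_simp
  have hcube : Real.exp (2 / Real.sqrt 3) = Real.exp x ^ 3 := by
    rw [h3x, show (3:ℝ) * x = x + x + x by ring, Real.exp_add, Real.exp_add]; ring
  rw [hcube]
  have hb : Real.exp x ≤ 1 / (1 - x) := exp_le_one_div_one_sub x hx1
  have h1x : 0 < 1 - x := by linarith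
  have : Real.exp x ^ 3 ≤ (1 / (1 - x)) ^ 3 :=
    pow_le_pow_left₀ (Real.exp_nonneg x) hb 3
  refine this.trans ?_
  rw [div_pow, one_pow, div_le_iff₀ (by positivity)]
  have hx' : x = 2 / (3 * Real.sqrt 3) := hxdef
  have h1 : (1 - x) = (3 * Real.sqrt 3 - 2) / (3 * Real.sqrt 3) := by
    rw [hx']; field_simp
  rw [h1, div_pow, ← mul_div_assoc, le_div_iff₀ (by positivity)]
  nlinarith [hs3, hlo, hhi]

theorem f3_aux_ineq (p θ : ℝ) (hp : p ∈ Set.Icc 0 (Real.sqrt 2))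
    (hθ : θ ∈ Set.Ico (Real.pi/6) Real.pi) :
    0 ≤ 1 - Real.exp ((2 * p / Real.sqrt 6) * Real.sin θ)
      + Real.sqrt 2 * p * Real.exp ((2 * p / Real.sqrt 6) * Real.sin θ) * Real.sin (θ - Real.pi/6)
      + Real.sqrt 2 * p * Real.sin (θ + Real.pi/6) := by
  obtain ⟨hp0, hp2⟩ := hp
  obtain ⟨hθ1, hθ2⟩ := hθ
  have hπ := Real.pi_pos
  have hs2 : Real.sqrt 2 ^ 2 = 2 := Real.sq_sqrt (by norm_num)
  have hs3 : Real.sqrt 3 ^ 2 = 3 := Real.sq_sqrt (by norm_num)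
  have hs2pos : 0 < Real.sqrt 2 := Real.sqrt_pos.2 (by norm_num)
  have hs3pos : 0 < Real.sqrt 3 := Real.sqrt_pos.2 (by norm_num)
  have hs6 : Real.sqrt 6 = Real.sqrt 2 * Real.sqrt 3 := by
    rw [← Real.sqrt_mul (by norm_num)]; norm_num
  have hs6pos : 0 < Real.sqrt 6 := by rw [hs6]; positivity
  have hsinθ0 : 0 ≤ Real.sin θ :=
    Real.sin_nonneg_of_nonneg_of_le_pi (by linarith) (le_of_lt hθ2)
  have hsinθ1 : Real.sin θ ≤ 1 := Real.sin_le_one θ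
  have hsm0 : 0 ≤ Real.sin (θ - Real.pi/6) :=
    Real.sin_nonneg_of_nonneg_of_le_pi (by linarith) (by linarith)
  have hid : Real.sin (θ + Real.pi/6) + Real.sin (θ - Real.pi/6)
      = Real.sqrt 3 * Real.sin θ := by
    rw [Real.sin_add, Real.sin_sub, Real.cos_pi_div_six, Real.sin_pi_div_six]
    ring
  set t := p * Real.sin θ with ht
  have ht0 : 0 ≤ t := mul_nonneg hp0 hsinθ0
  have ht2 : t ≤ Real.sqrt 2 := by nlinarith
  set μ := t / Real.sqrt 2 with hμ
  have hμ0 : 0 ≤ μ := div_nonneg ht0 hs2pos.le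
  have hμ1 : μ ≤ 1 := by rw [hμ, div_le_one hs2pos]; exact ht2
  have hconv := convexOn_exp.2 (Set.mem_univ (0:ℝ))
    (Set.mem_univ (2 / Real.sqrt 3)) (by linarith : (0:ℝ) ≤ 1 - μ) hμ0 (by ring)
  simp only [smul_eq_mul, mul_zero, zero_add, Real.exp_zero, mul_one] at hconv
  have hexp_eq : (2 * p / Real.sqrt 6) * Real.sin θ = μ * (2 / Real.sqrt 3) := by
    rw [hμ, ht, hs6]; field_simp
  set E := Real.exp ((2 * p / Real.sqrt 6) * Real.sin θ) with hE
  have hE1 : 1 ≤ E := by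
    rw [hE]
    apply Real.one_le_exp
    positivity
  have hEb : E ≤ 1 + Real.sqrt 6 * t := by
    rw [hE, hexp_eq]
    calc Real.exp (μ * (2 / Real.sqrt 3)) ≤ (1 - μ) + μ * Real.exp (2 / Real.sqrt 3) :=
          hconv
      _ ≤ (1 - μ) + μ * (1 + 2 * Real.sqrt 3) := by
          have := exp_key
          nlinarith
      _ = 1 + 2 * Real.sqrt 3 * μ := by ring
      _ = 1 + Real.sqrt 6 * t := by
          have h22 : Real.sqrt 2 * Real.sqrt 2 = 2 := Real.mul_self_sqrt (by norm_num)
          rw [hμ, hs6]; field_simp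
          linear_combination (-Real.sqrt 3 * t) * hs2
  have hprod : 0 ≤ Real.sqrt 2 * p * Real.sin (θ - Real.pi/6) * (E - 1) :=
    mul_nonneg (mul_nonneg (mul_nonneg hs2pos.le hp0) hsm0) (by linarith)
  have hplus : Real.sin (θ + Real.pi/6) = Real.sqrt 3 * Real.sin θ - Real.sin (θ - Real.pi/6) := by
    linarith
  rw [hplus]
  have hkey : Real.sqrt 2 * p * (Real.sqrt 3 * Real.sin θ) = Real.sqrt 6 * t := by
    rw [ht, hs6]; ring
  nlinarith [hprod, hEb, hkey]
end

section
/- Define r(ζ,η) = √2·(√3·ζ/2 + η/2) + √2·e^{2ζ/√6}·(√3·ζ/2 - η/2) - e^{2ζ/√6} + 1. Then r(ζ,η) ≥ 0 for all ζ, η ∈ [0,√2]. -/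
/-!
In the variables `t = 2ζ/√6 ≥ 0` and `a = η/√2 ≤ 1`, `r` becomes
`expProfile a t = eᵗ (3t/2 - a - 1) + 3t/2 + a + 1`, which vanishes at `t = 0`.
Its `t`-derivative is `eᵗ (3t/2 - a + 1/2) + 3/2`, and the bound `e⁻ᵗ ≥ 1 - t` shows it is
at least `eᵗ (2 - a) ≥ 0` whenever `a ≤ 2`; so `expProfile a` is monotone and nonnegative
for `t ≥ 0`.
-/

open Real

noncomputable def expProfile (a t : ℝ) : ℝ := exp t * (3 / 2 * t - a - 1) + 3 / 2 * t + a + 1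

lemma hasDerivAt_expProfile (a x : ℝ) :
    HasDerivAt (expProfile a) (exp x * (3 / 2 * x - a + 1 / 2) + 3 / 2) x := by
  have hlin : HasDerivAt (fun t => 3 / 2 * t - a - 1) (3 / 2) x := by
    simpa using (((hasDerivAt_id x).const_mul (3 / 2 : ℝ)).sub_const a).sub_const 1
  have h := ((((hasDerivAt_exp x).mul hlin).add
    ((hasDerivAt_id x).const_mul (3 / 2 : ℝ))).add_const a).add_const 1
  exact h.congr_deriv (by ring)

lemma deriv_expProfile_nonneg {a : ℝ} (ha : a ≤ 2) (x : ℝ) :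
    0 ≤ exp x * (3 / 2 * x - a + 1 / 2) + 3 / 2 := by
  have hinv : exp x * exp (-x) = 1 := by rw [← exp_add, add_neg_cancel, exp_zero]
  have htangent : -x + 1 ≤ exp (-x) := add_one_le_exp (-x)
  calc 0 ≤ exp x * (2 - a) := mul_nonneg (exp_pos x).le (by linarith)
    _ = exp x * (3 / 2 * x - a + 1 / 2) + 3 / 2 * (exp x * (-x + 1)) := by ring
    _ ≤ exp x * (3 / 2 * x - a + 1 / 2) + 3 / 2 * (exp x * exp (-x)) := by gcongr
    _ = exp x * (3 / 2 * x - a + 1 / 2) + 3 / 2 := by rw [hinv, mul_one]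

lemma expProfile_nonneg {a t : ℝ} (ha : a ≤ 2) (ht : 0 ≤ t) : 0 ≤ expProfile a t := by
  have hmono : Monotone (expProfile a) :=
    monotone_of_hasDerivAt_nonneg (hasDerivAt_expProfile a) (deriv_expProfile_nonneg ha)
  have hF0 : expProfile a 0 = 0 := by simp only [expProfile, exp_zero]; ring
  exact hF0 ▸ hmono ht

theorem r_nonneg (ζ η : ℝ) (hζ : ζ ∈ Set.Icc 0 (Real.sqrt 2))
    (hη : η ∈ Set.Icc 0 (Real.sqrt 2)) :
    0 ≤ Real.sqrt 2 * (Real.sqrt 3 * ζ / 2 + η / 2)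
      + Real.sqrt 2 * Real.exp (2 * ζ / Real.sqrt 6) * (Real.sqrt 3 * ζ / 2 - η / 2)
      - Real.exp (2 * ζ / Real.sqrt 6) + 1 := by
  have h6 : √6 * √6 = 6 := mul_self_sqrt (by norm_num)
  have h23 : √2 * √3 = √6 := by rw [← sqrt_mul (by norm_num)]; norm_num
  have hsqrt6 : 0 < √6 := by positivity
  have hζt : √2 * √3 * ζ / 2 = 3 / 2 * (2 * ζ / √6) := by
    rw [h23]; field_simp; linear_combination ζ * h6
  have ha : √2 * η / 2 ≤ 2 := by
    nlinarith [hη.2, sqrt_nonneg 2, sq_sqrt (zero_le_two : (0 : ℝ) ≤ 2)]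
  have hF := expProfile_nonneg ha (by have := hζ.1; positivity : 0 ≤ 2 * ζ / √6)
  unfold expProfile at hF
  linear_combination hF - (1 + exp (2 * ζ / √6)) * hζt
end

section
/- For all ζ, η ∈ [0,√2], one has e^{√(2/3)·ζ}·(ζ - η/√3 + 1/√6) + √(3/2) ≥ √(2/3). -/
theorem deriv_bound (ζ η : ℝ) (hζ : ζ ∈ Set.Icc 0 (Real.sqrt 2))
    (hη : η ∈ Set.Icc 0 (Real.sqrt 2)) :
    Real.sqrt (2/3) ≤ Real.exp (Real.sqrt (2/3) * ζ) * (ζ - η / Real.sqrt 3 + 1 / Real.sqrt 6)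
      + Real.sqrt (3/2) := by
  obtain ⟨hζ0, hζ2⟩ := hζ
  obtain ⟨hη0, hη2⟩ := hη
  have hS : (0:ℝ) < Real.sqrt 6 := by positivity
  have h3 : (0:ℝ) < Real.sqrt 3 := by positivity
  have hS2 : Real.sqrt 6 ^ 2 = 6 := Real.sq_sqrt (by norm_num)
  have hA : Real.sqrt (2/3) = 2 / Real.sqrt 6 := by
    rw [show (2:ℝ)/3 = 4/6 by norm_num, Real.sqrt_div (by norm_num) 6,
      show (4:ℝ) = 2^2 by norm_num, Real.sqrt_sq (by norm_num)]
  have hB : Real.sqrt (3/2) = 3 / Real.sqrt 6 := by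
    rw [show (3:ℝ)/2 = 9/6 by norm_num, Real.sqrt_div (by norm_num) 6,
      show (9:ℝ) = 3^2 by norm_num, Real.sqrt_sq (by norm_num)]
  have hC : Real.sqrt 2 / Real.sqrt 3 = 2 / Real.sqrt 6 := by
    rw [← Real.sqrt_div (by norm_num) 3, hA]
  set S := Real.sqrt 6 with hSdef
  set E := Real.exp (Real.sqrt (2/3) * ζ) with hEdef
  have hE : 0 < E := Real.exp_pos _
  -- bound on η term
  have hη' : η / Real.sqrt 3 ≤ 2 / S := by
    rw [← hC]; exact div_le_div_of_nonneg_right hη2 h3.le |>.trans_eq rfl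
  -- key exp inequality: E * (1 - c ζ) ≤ 1 with c = 2/S
  have hc : Real.sqrt (2/3) * ζ = 2 / S * ζ := by rw [hA]
  have hexp : E * (1 - (2/S) * ζ) ≤ 1 := by
    have h1 : (-((2/S) * ζ)) + 1 ≤ Real.exp (-((2/S) * ζ)) := Real.add_one_le_exp _
    have h2 : E * Real.exp (-((2/S) * ζ)) = 1 := by
      rw [hEdef, hc, ← Real.exp_add]; simp
    nlinarith [hE]
  rw [hA, hB]
  -- reduce to η = √2 and prove: -1/S ≤ E * (ζ - 1/S)
  have key : -(1/S) ≤ E * (ζ - 1/S) := by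
    rcases le_or_gt (1/S) ζ with h | h
    · have : 0 ≤ E * (ζ - 1/S) := mul_nonneg hE.le (by linarith)
      have : 0 < 1/S := by positivity
      linarith
    · -- ζ < 1/S ; use hexp, with (2/S)*(1/S) = 1/3
      have hq : (2/S) * (1/S) = 1/3 := by
        field_simp
        nlinarith [hS2]
      have hq2 : (1/S) * ((2/S) * ζ) = (1/3) * ζ := by
        rw [show (1/S) * ((2/S) * ζ) = ((2/S) * (1/S)) * ζ by ring, hq]
      have h1 : 1/S - ζ ≤ (1/S) * (1 - (2/S)*ζ) := by
        have : (1/S) * (1 - (2/S)*ζ) = 1/S - (1/S) * ((2/S) * ζ) := by ring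
        rw [this, hq2]; linarith
      have h2 : E * (1/S - ζ) ≤ E * ((1/S) * (1 - (2/S)*ζ)) :=
        mul_le_mul_of_nonneg_left h1 hE.le
      have h3' : E * ((1/S) * (1 - (2/S)*ζ)) ≤ 1/S := by
        have := mul_le_mul_of_nonneg_left hexp (le_of_lt (show (0:ℝ) < 1/S by positivity))
        nlinarith
      nlinarith
  have hmono : E * (ζ - 2/S + 1/S) ≤ E * (ζ - η / Real.sqrt 3 + 1/S) := by
    apply mul_le_mul_of_nonneg_left _ hE.le
    linarith
  have heq : E * (ζ - 2/S + 1/S) = E * (ζ - 1/S) := by ring_nf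
  have h2S : (2:ℝ)/S = 3/S - 1/S := by ring
  linarith
end

section
/- The function ζ ↦ 1 + e^{2ζ/√6} + (√6/2)·ζ·(1 - e^{2ζ/√6}) is positive on the interval [0,√2]. -/
theorem aux_fn_pos (ζ : ℝ) (hζ : ζ ∈ Set.Icc 0 (Real.sqrt 2)) :
    0 < 1 + Real.exp (2 * ζ / Real.sqrt 6)
      + (Real.sqrt 6 / 2) * ζ * (1 - Real.exp (2 * ζ / Real.sqrt 6)) := by
  obtain ⟨h0, h2⟩ := hζ
  set t : ℝ := 2 * ζ / Real.sqrt 6 with ht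
  have h6 : (0:ℝ) < Real.sqrt 6 := Real.sqrt_pos.mpr (by norm_num)
  have hsq6 : Real.sqrt 6 ^ 2 = 6 := Real.sq_sqrt (by norm_num)
  have hsq2 : Real.sqrt 2 ^ 2 = 2 := Real.sq_sqrt (by norm_num)
  have h20 : (0:ℝ) ≤ Real.sqrt 2 := Real.sqrt_nonneg 2
  -- rewrite coefficient
  have hcoef : Real.sqrt 6 / 2 * ζ = 3 / 2 * t := by
    rw [ht]; field_simp; nlinarith [hsq6]
  rw [hcoef]
  have ht0 : 0 ≤ t := by positivity
  have ht7 : t ≤ 7 / 6 := by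
    rw [ht, div_le_iff₀ h6]
    nlinarith [mul_le_mul h2 (le_refl (Real.sqrt 6)) h6.le h20, hsq2, hsq6,
      Real.sq_sqrt (show (0:ℝ) ≤ 2 by norm_num), sq_nonneg (Real.sqrt 2 * Real.sqrt 6 - 12/7 * ζ),
      mul_pos h6 h6]
  have hE1 : 1 ≤ Real.exp t := Real.one_le_exp ht0
  have hEub : Real.exp t ≤ 33 / 10 := by
    have h1 : Real.exp t ≤ Real.exp (7/6) := Real.exp_le_exp.mpr ht7
    have h2' : Real.exp (7/6) = Real.exp 1 * Real.exp (1/6) := by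
      rw [← Real.exp_add]; norm_num
    have h3 : Real.exp (1/6) ≤ 6/5 := by
      have := Real.add_one_le_exp (-(1/6 : ℝ))
      have hpos := Real.exp_pos (-(1/6 : ℝ))
      rw [Real.exp_neg] at this hpos
      nlinarith [mul_le_mul_of_nonneg_left this (Real.exp_pos (1/6:ℝ)).le,
        mul_inv_cancel₀ (ne_of_gt (Real.exp_pos (1/6:ℝ)))]
    have h4 : Real.exp 1 < 2.7182818286 := Real.exp_one_lt_d9
    calc Real.exp t ≤ Real.exp 1 * Real.exp (1/6) := by rw [← h2']; exact h1
      _ ≤ 2.7182818286 * (6/5) := by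
          apply mul_le_mul h4.le h3 (Real.exp_pos _).le (by norm_num)
      _ ≤ 33 / 10 := by norm_num
  nlinarith [mul_le_mul_of_nonneg_left ht7 (sub_nonneg.mpr hE1),
    mul_nonneg ht0 (sub_nonneg.mpr hE1)]
end

section
/- Define h(ζ,√2) = √(-(3ζ²)/2 + √6·ζ + 3) - √6·ζ·(e^{√(2/3)ζ} - 1)/(e^{√(2/3)ζ} + 1) for ζ ∈ [0,√2]. Then h(ζ,√2) ≥ 3^{1/4}·(√2 - 2·3^{1/4}·tanh(1/√3)) > 0 for all ζ ∈ [0,√2]. -/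
set_option maxHeartbeats 1000000

private lemma tanh_eq' (x : ℝ) : Real.tanh x = (Real.exp (2*x) - 1) / (Real.exp (2*x) + 1) := by
  have h1 : Real.exp (2*x) = Real.exp x * Real.exp x := by rw [← Real.exp_add]; ring_nf
  have hp := Real.exp_pos x
  rw [Real.tanh_eq_sinh_div_cosh, Real.sinh_eq, Real.cosh_eq, h1, Real.exp_neg]
  field_simp

private lemma core (ζ s2 s3 s6 w sQ t ta : ℝ)
    (h0 : 0 ≤ ζ) (h2le : ζ ≤ s2)
    (hs2sq : s2^2 = 2) (hs2lb : 1.4142 ≤ s2)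
    (hs3lb : 1.73205 ≤ s3)
    (hs6eq : s6 = s2 * s3) (hs6lb : 2.449 ≤ s6) (hs6ub : s6 ≤ 2.4495)
    (hwsq : w^2 = 2*s3) (hwpos : 0 < w)
    (htnn : 0 ≤ t) (htle : t ≤ ta) (htalb : 1/3 ≤ ta)
    (hsQnn : 0 ≤ sQ)
    (hcase1 : 2*s3 ≤ -(3 * ζ^2) / 2 + s6 * ζ + 3 → w ≤ sQ)
    (hcase2 : -(3 * ζ^2) / 2 + s6 * ζ + 3 ≤ 2*s3 →
        -(3 * ζ^2) / 2 + s6 * ζ + 3 ≤ sQ * w) :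
    w - 2*s3*ta ≤ sQ - s6 * ζ * t := by
  have hD : 0 ≤ s2 - ζ := by linarith
  have hs6nn : (0:ℝ) ≤ s6 := by linarith
  have h2s3 : 2*s3 = s6 * s2 := by
    rw [hs6eq]; linear_combination (-s3) * hs2sq
  have h2s3ta : 2*s3*ta = s6 * s2 * ta := by rw [h2s3]
  have h1 : ζ * t ≤ ζ * ta := mul_le_mul_of_nonneg_left htle h0
  have h2 : (s2 - ζ) * (1/3) ≤ (s2 - ζ) * ta := mul_le_mul_of_nonneg_left htalb hD
  have h3 : (s2 - ζ) * (1/3) ≤ s2 * ta - ζ * t := by nlinarith [h1, h2]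
  have hT : s6 * ((s2 - ζ) * (1/3)) ≤ s6 * (s2 * ta - ζ * t) :=
    mul_le_mul_of_nonneg_left h3 hs6nn
  rcases le_or_gt (2*s3) (-(3 * ζ^2) / 2 + s6 * ζ + 3) with hc | hc
  · have hw := hcase1 hc
    have hζt : s6 * (ζ * t) ≤ s6 * (s2 * ta) :=
      mul_le_mul_of_nonneg_left (mul_le_mul h2le htle htnn (by linarith)) hs6nn
    nlinarith [hw, hζt, h2s3ta]
  · have hQw := hcase2 hc.le
    have hw18 : 1.86 ≤ w := by nlinarith [hwsq, hwpos, hs3lb]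
    have hwsQ : w - sQ ≤ s6 * (s2 - ζ) * (1/3) := by
      have hkey : 3*(s6 - (3/2)*s2) ≤ s6 * w := by
        have hprod := mul_le_mul hs6lb hw18 (by norm_num) (by linarith : (0:ℝ) ≤ s6)
        nlinarith [hprod, hs6ub, hs2lb]
      have e1 : (w - sQ) * w ≤ 2*s3 - (-(3 * ζ^2) / 2 + s6 * ζ + 3) := by
        have : (w - sQ) * w = 2*s3 - sQ * w := by
          linear_combination hwsq
        linarith [hQw, this]
      have e2 : 2*s3 - (-(3 * ζ^2) / 2 + s6 * ζ + 3)
          = (s2 - ζ) * (s6 - (3/2)*(ζ + s2)) := by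
        rw [hs6eq]; linear_combination (3/2 - s3) * hs2sq
      have e3 : (s2 - ζ) * (s6 - (3/2)*(ζ + s2)) ≤ (s2 - ζ) * (s6 - (3/2)*s2) :=
        mul_le_mul_of_nonneg_left (by linarith) hD
      have e4 : (s2 - ζ) * (s6 - (3/2)*s2) ≤ (s2 - ζ) * (s6 * w / 3) :=
        mul_le_mul_of_nonneg_left (by linarith [hkey]) hD
      have e5 : (s2 - ζ) * (s6 * w / 3) = (s6 * (s2 - ζ) * (1/3)) * w := by ring
      have hstep : (w - sQ) * w ≤ (s6 * (s2 - ζ) * (1/3)) * w := by linarith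
      exact le_of_mul_le_mul_right hstep hwpos
    nlinarith [hT, hwsQ, h2s3ta]

theorem h_bound (ζ : ℝ) (hζ : ζ ∈ Set.Icc 0 (Real.sqrt 2)) :
    Real.sqrt (-(3 * ζ^2) / 2 + Real.sqrt 6 * ζ + 3)
      - Real.sqrt 6 * ζ * (Real.exp (Real.sqrt (2/3) * ζ) - 1)
          / (Real.exp (Real.sqrt (2/3) * ζ) + 1)
      ≥ (3 : ℝ)^((1:ℝ)/4) * (Real.sqrt 2 - 2 * (3 : ℝ)^((1:ℝ)/4) * Real.tanh (1 / Real.sqrt 3)) ∧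
    0 < (3 : ℝ)^((1:ℝ)/4) * (Real.sqrt 2 - 2 * (3 : ℝ)^((1:ℝ)/4) * Real.tanh (1 / Real.sqrt 3)) := by
  obtain ⟨h0, h2le⟩ := hζ
  set s2 := Real.sqrt 2 with hs2def
  set s3 := Real.sqrt 3 with hs3def
  set s6 := Real.sqrt 6 with hs6def
  set r := (3:ℝ)^((1:ℝ)/4) with hrdef
  have hs2sq : s2 ^ 2 = 2 := Real.sq_sqrt (by norm_num)
  have hs3sq : s3 ^ 2 = 3 := Real.sq_sqrt (by norm_num)
  have hs6sq : s6 ^ 2 = 6 := Real.sq_sqrt (by norm_num)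
  have hs2pos : 0 < s2 := Real.sqrt_pos.mpr (by norm_num)
  have hs3pos : 0 < s3 := Real.sqrt_pos.mpr (by norm_num)
  have hs6pos : 0 < s6 := Real.sqrt_pos.mpr (by norm_num)
  have hs2lb : 1.4142 ≤ s2 := by
    rw [hs2def]; rw [show (1.4142:ℝ) = Real.sqrt (1.4142^2) from (Real.sqrt_sq (by norm_num)).symm]
    exact Real.sqrt_le_sqrt (by norm_num)
  have hs2ub : s2 ≤ 1.41422 := by
    rw [hs2def, show (1.41422:ℝ) = Real.sqrt (1.41422^2) from (Real.sqrt_sq (by norm_num)).symm]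
    exact Real.sqrt_le_sqrt (by norm_num)
  have hs3lb : 1.73205 ≤ s3 := by
    rw [hs3def, show (1.73205:ℝ) = Real.sqrt (1.73205^2) from (Real.sqrt_sq (by norm_num)).symm]
    exact Real.sqrt_le_sqrt (by norm_num)
  have hs3ub : s3 ≤ 1.7320509 := by
    rw [hs3def, show (1.7320509:ℝ) = Real.sqrt (1.7320509^2) from (Real.sqrt_sq (by norm_num)).symm]
    exact Real.sqrt_le_sqrt (by norm_num)
  have hs6lb : 2.449 ≤ s6 := by
    rw [hs6def, show (2.449:ℝ) = Real.sqrt (2.449^2) from (Real.sqrt_sq (by norm_num)).symm]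
    exact Real.sqrt_le_sqrt (by norm_num)
  have hs6ub : s6 ≤ 2.4495 := by
    rw [hs6def, show (2.4495:ℝ) = Real.sqrt (2.4495^2) from (Real.sqrt_sq (by norm_num)).symm]
    exact Real.sqrt_le_sqrt (by norm_num)
  have hs6eq : s6 = s2 * s3 := by
    rw [hs6def, hs2def, hs3def, ← Real.sqrt_mul (by norm_num)]; norm_num
  -- r facts
  have hrr : r * r = s3 := by
    rw [hrdef, ← Real.rpow_add (by norm_num : (0:ℝ) < 3), hs3def, Real.sqrt_eq_rpow]
    norm_num
  have hrpos : 0 < r := Real.rpow_pos_of_pos (by norm_num) _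
  have hrub : r ≤ 1.31608 := by
    nlinarith [hrr, hrpos, hs3ub]
  have hrlb : 1.316 ≤ r := by nlinarith [hrr, hrpos, hs3lb]
  -- sqrt(2/3) = s2 / s3
  have h23 : Real.sqrt (2/3) = s2 / s3 := by
    rw [hs2def, hs3def, Real.sqrt_div (by norm_num)]
  have h23nn : 0 ≤ Real.sqrt (2/3) := Real.sqrt_nonneg _
  -- endpoint exp argument : sqrt(2/3) * s2 = 2 / s3 = 2 * (1/s3)
  have hargA : Real.sqrt (2/3) * s2 = 2 * (1 / s3) := by
    rw [h23]; field_simp; nlinarith [hs2sq]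
  -- tanh value
  set Ea := Real.exp (Real.sqrt (2/3) * s2) with hEadef
  have hta : Real.tanh (1 / s3) = (Ea - 1) / (Ea + 1) := by
    rw [tanh_eq', hEadef, hargA]
  have hEapos : 0 < Ea := Real.exp_pos _
  -- lower bound on Ea : Ea ≥ 2
  have hEalb : 2 ≤ Ea := by
    have hinv : (1:ℝ)/2 ≤ 1/s3 := by
      rw [div_le_div_iff₀ (by norm_num) hs3pos]; nlinarith
    have h1 : (1:ℝ) ≤ Real.sqrt (2/3) * s2 := by rw [hargA]; linarith
    have h2 := Real.add_one_le_exp (Real.sqrt (2/3) * s2)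
    rw [hEadef]; linarith
  -- upper bound on Ea
  have hEaub : Ea ≤ 3.217 := by
    have harg : Real.sqrt (2/3) * s2 ≤ 1.155 := by
      rw [hargA]
      rw [show (2:ℝ) * (1/s3) = 2 / s3 from by ring, div_le_iff₀ hs3pos]
      nlinarith
    have hmono : Ea ≤ Real.exp 1.155 := by
      rw [hEadef]; exact Real.exp_le_exp.mpr harg
    have hsplit : Real.exp (1.155:ℝ) = Real.exp 1 * Real.exp 0.155 := by
      rw [← Real.exp_add]; norm_num
    have he1 : Real.exp 1 < 2.7182818286 := Real.exp_one_lt_d9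
    have hp : 0 < Real.exp (0.155:ℝ) := Real.exp_pos _
    have he2 : Real.exp (0.155:ℝ) * 0.845 ≤ 1 := by
      have h := Real.add_one_le_exp (-(0.155:ℝ))
      rw [Real.exp_neg] at h
      have hc : Real.exp (0.155:ℝ) * (Real.exp (0.155:ℝ))⁻¹ = 1 :=
        mul_inv_cancel₀ (ne_of_gt hp)
      have h3 := mul_le_mul_of_nonneg_right h hp.le
      nlinarith [h3, hc]
    have he155 : Real.exp (0.155:ℝ) ≤ 1.18344 := by linarith
    calc Ea ≤ Real.exp 1.155 := hmono
    _ = Real.exp 1 * Real.exp 0.155 := hsplit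
    _ ≤ 2.7182818286 * 1.18344 :=
        mul_le_mul (le_of_lt he1) he155 hp.le (by norm_num)
    _ ≤ 3.217 := by norm_num
  -- tanh bounds
  have htalb : (1:ℝ)/3 ≤ (Ea - 1) / (Ea + 1) := by
    rw [le_div_iff₀ (by linarith)]; linarith
  have htaub : (Ea - 1) / (Ea + 1) ≤ 0.5258 := by
    rw [div_le_iff₀ (by linarith)]; linarith
  have htann : (0:ℝ) ≤ (Ea - 1) / (Ea + 1) := div_nonneg (by linarith) (by linarith)
  -- PART 2 : positivity of the constant
  have hpart2 : 0 < r * (s2 - 2 * r * Real.tanh (1 / s3)) := by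
    rw [hta]
    have : 2 * r * ((Ea - 1) / (Ea + 1)) ≤ 2 * 1.31608 * 0.5258 := by
      apply mul_le_mul (by nlinarith) htaub htann (by norm_num)
    apply mul_pos hrpos
    nlinarith
  refine ⟨?_, hpart2⟩
  -- PART 1 : main bound
  -- abbreviations
  set E := Real.exp (Real.sqrt (2/3) * ζ) with hEdef
  set t := (E - 1) / (E + 1) with htdef
  set ta := (Ea - 1) / (Ea + 1) with htadef
  have hEpos : 0 < E := Real.exp_pos _
  have hE1 : 1 ≤ E := by
    rw [hEdef]; exact Real.one_le_exp (by positivity)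
  have hEle : E ≤ Ea := by
    rw [hEdef, hEadef]
    exact Real.exp_le_exp.mpr (mul_le_mul_of_nonneg_left h2le h23nn)
  have htnn : 0 ≤ t := by rw [htdef]; exact div_nonneg (by linarith) (by linarith)
  have htle : t ≤ ta := by
    rw [htdef, htadef, div_le_div_iff₀ (by linarith) (by linarith)]
    nlinarith
  have htaub3 : ta ≤ 1 := by rw [htadef, div_le_iff₀ (by linarith)]; linarith
  -- rewrite the RHS
  have hQa : (0:ℝ) ≤ 2 * s3 := by positivity
  set w := Real.sqrt (2 * s3) with hwdef
  have hwsq : w ^ 2 = 2 * s3 := Real.sq_sqrt hQa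
  have hwpos : 0 < w := Real.sqrt_pos.mpr (by positivity)
  have hwr : w = r * s2 := by
    rw [hwdef, hs2def, Real.sqrt_mul (by norm_num), hrdef, hs3def,
      Real.sqrt_eq_rpow (Real.sqrt 3), Real.sqrt_eq_rpow 3, ← Real.rpow_mul (by norm_num)]
    norm_num
    ring
  have hRHS : r * (s2 - 2 * r * Real.tanh (1 / s3)) = w - 2 * s3 * ta := by
    rw [hta, hwr]; linear_combination (-2*ta) * hrr
  rw [hRHS, ge_iff_le, mul_div_assoc, ← htdef]
  refine core ζ s2 s3 s6 w (Real.sqrt (-(3 * ζ^2) / 2 + s6 * ζ + 3)) t ta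
    h0 h2le hs2sq hs2lb hs3lb hs6eq hs6lb hs6ub hwsq hwpos htnn htle htalb
    (Real.sqrt_nonneg _) ?_ ?_
  · intro h
    rw [hwdef]
    exact Real.sqrt_le_sqrt h
  · intro h
    rcases le_or_gt (-(3 * ζ^2) / 2 + s6 * ζ + 3) 0 with hQ0 | hQ0
    · exact le_trans hQ0 (mul_nonneg (Real.sqrt_nonneg _) hwpos.le)
    · have h1 : Real.sqrt (-(3 * ζ^2) / 2 + s6 * ζ + 3) * w
          = Real.sqrt ((-(3 * ζ^2) / 2 + s6 * ζ + 3) * (2*s3)) := by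
        rw [hwdef, ← Real.sqrt_mul hQ0.le]
      rw [h1]
      nth_rewrite 1 [show -(3 * ζ^2) / 2 + s6 * ζ + 3
          = Real.sqrt ((-(3 * ζ^2) / 2 + s6 * ζ + 3) * (-(3 * ζ^2) / 2 + s6 * ζ + 3))
        from (Real.sqrt_mul_self hQ0.le).symm]
      exact Real.sqrt_le_sqrt (mul_le_mul_of_nonneg_left h hQ0.le)
end
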